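/- arXiv:2203.15843 — 4 statements merged into one kernel-verified Lean document; each statement's English description precedes it below -/
import Mathlib

section
/- Let f : ℝ → ℝ be an even function that is nonincreasing in |x| (i.e., f(x) = f(-x) and f(x) ≥ f(y) whenever |x| ≤ |y|), integrable enough for its Hilbert transform to exist. Then the Hilbert transform H(f)(x) = (1/π) p.v. ∫ f(y)/(x−y) dy satisfies H(f)(x) ≥ 0 for all x ≥ 0 and H(f)(x) ≤ 0 for all x ≤ 0. -/
open MeasureTheory Filter Set Topology

/-- `IsHilbertTransform f Hf` : at every point `x`, the principal value
`(1/π) lim_{ε→0⁺} ∫_ε^∞ (f(x−y) − f(x+y))/y dy` exists and equals `Hf x`. -/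
def IsHilbertTransform (f Hf : ℝ → ℝ) : Prop :=
  ∀ x : ℝ, Tendsto (fun ε : ℝ => ∫ y in Set.Ioi ε, (f (x - y) - f (x + y)) / y)
    (𝓝[>] (0 : ℝ)) (𝓝 (Real.pi * Hf x))

/-- If `f` is even, nonincreasing in `|x|`, integrable enough (say `f ∈ L¹ ∩ L²`)
and its Hilbert transform `Hf` exists pointwise, then `Hf ≥ 0` on `[0,∞)`
and `Hf ≤ 0` on `(−∞,0]`. -/
theorem hilbert_sign_of_symmetric_decreasing (f Hf : ℝ → ℝ)
    (hint : Integrable f) (hL2 : MemLp f 2)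
    (heven : ∀ x, f (-x) = f x)
    (hdec : ∀ x y : ℝ, |x| ≤ |y| → f y ≤ f x)
    (hH : IsHilbertTransform f Hf) :
    (∀ x : ℝ, 0 ≤ x → 0 ≤ Hf x) ∧ (∀ x : ℝ, x ≤ 0 → Hf x ≤ 0) := by
  constructor
  · intro x hx
    have hπ : 0 ≤ Real.pi * Hf x := by
      refine ge_of_tendsto (hH x) ?_
      filter_upwards [self_mem_nhdsWithin] with ε (hε : 0 < ε)
      refine setIntegral_nonneg measurableSet_Ioi fun y hy => ?_
      have hy0 : 0 < y := hε.trans hy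
      have h1 : |x - y| ≤ |x + y| := by
        rcases abs_cases (x - y) with ⟨h1,_⟩|⟨h1,_⟩ <;>
          rcases abs_cases (x + y) with ⟨h2,_⟩|⟨h2,_⟩ <;> linarith
      have := hdec (x - y) (x + y) h1
      exact div_nonneg (by linarith) hy0.le
    nlinarith [Real.pi_pos]
  · intro x hx
    have hπ : Real.pi * Hf x ≤ 0 := by
      refine le_of_tendsto (hH x) ?_
      filter_upwards [self_mem_nhdsWithin] with ε (hε : 0 < ε)
      refine setIntegral_nonpos measurableSet_Ioi fun y hy => ?_
      have hy0 : 0 < y := hε.trans hy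
      have h1 : |x + y| ≤ |x - y| := by
        rcases abs_cases (x - y) with ⟨h1,_⟩|⟨h1,_⟩ <;>
          rcases abs_cases (x + y) with ⟨h2,_⟩|⟨h2,_⟩ <;> linarith
      have := hdec (x + y) (x - y) h1
      exact div_nonpos_of_nonpos_of_nonneg (by linarith) hy0.le
    nlinarith [Real.pi_pos]
end

section
/- Define the Hilbert space X of even real-valued functions u on ℝ with finite norm ‖u‖_X² = ‖u‖_{H¹}² + ∫_ℝ log(1+|x|) |u(x)|² dx. Then the embedding X ↪ L²_even(ℝ) is compact: every bounded sequence in X has a subsequence converging strongly in L²(ℝ). -/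
open MeasureTheory Filter Set Topology

open scoped ENNReal NNReal

lemma holder_interval (d : ℝ → ℝ) (hd : MemLp d 2 (volume : Measure ℝ)) (a b : ℝ) (hab : a ≤ b) :
    |∫ x in a..b, d x| ≤ (eLpNorm d 2 volume).toReal * Real.sqrt (b - a) := by
  have hfin : volume (Set.uIoc a b) ≠ ⊤ := by
    rw [Set.uIoc_of_le hab]; simp [Real.volume_Ioc]
  haveI : IsFiniteMeasure (volume.restrict (Set.uIoc a b)) :=
    ⟨by rwa [Measure.restrict_apply_univ, lt_top_iff_ne_top]⟩
  have hd2 : MemLp d 2 (volume.restrict (Set.uIoc a b)) := hd.restrict _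
  have hint : IntervalIntegrable d volume a b := by
    rw [intervalIntegrable_iff]
    exact hd2.integrable (by norm_num)
  have h1 : |∫ x in a..b, d x| ≤ ∫ x in a..b, |d x| :=
    intervalIntegral.abs_integral_le_integral_abs hab
  have h2 : (∫ x in a..b, |d x|) = (eLpNorm d 1 (volume.restrict (Set.uIoc a b))).toReal := by
    rw [intervalIntegral.integral_of_le hab, eLpNorm_one_eq_lintegral_enorm]
    rw [← Set.uIoc_of_le hab]
    rw [← integral_norm_eq_lintegral_enorm hd2.aestronglyMeasurable]
    simp [Real.norm_eq_abs]
  have h3 := eLpNorm_le_eLpNorm_mul_rpow_measure_univ (p := 1) (q := 2)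
      (μ := volume.restrict (Set.uIoc a b)) (f := d) (by norm_num) hd2.aestronglyMeasurable
  have hμ : (volume.restrict (Set.uIoc a b)) Set.univ = ENNReal.ofReal (b - a) := by
    rw [Measure.restrict_apply_univ, Set.uIoc_of_le hab, Real.volume_Ioc]
  have h4 : eLpNorm d 2 (volume.restrict (Set.uIoc a b)) ≤ eLpNorm d 2 volume :=
    eLpNorm_mono_measure _ Measure.restrict_le_self
  have hexp : (1 / (1:ℝ≥0∞).toReal - 1 / (2:ℝ≥0∞).toReal) = (1/2 : ℝ) := by norm_num
  have h5 : eLpNorm d 1 (volume.restrict (Set.uIoc a b)) ≤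
      eLpNorm d 2 volume * ENNReal.ofReal (Real.sqrt (b - a)) := by
    refine h3.trans ?_
    rw [hμ]
    gcongr
    simp only [ENNReal.toReal_one, ENNReal.toReal_ofNat] at *
    rw [show (1/1 - 1/2 : ℝ) = (1/2:ℝ) by norm_num,
      ENNReal.ofReal_rpow_of_nonneg (by linarith : (0:ℝ) ≤ b - a) (by norm_num : (0:ℝ) ≤ 1/2),
      Real.sqrt_eq_rpow]
  calc |∫ x in a..b, d x| ≤ ∫ x in a..b, |d x| := h1
    _ = (eLpNorm d 1 (volume.restrict (Set.uIoc a b))).toReal := h2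
    _ ≤ (eLpNorm d 2 volume * ENNReal.ofReal (Real.sqrt (b - a))).toReal := by
        apply ENNReal.toReal_mono _ h5
        exact ENNReal.mul_ne_top hd.eLpNorm_ne_top ENNReal.ofReal_ne_top
    _ ≤ (eLpNorm d 2 volume).toReal * Real.sqrt (b - a) := by
        rw [ENNReal.toReal_mul, ENNReal.toReal_ofReal (Real.sqrt_nonneg _)]

lemma memLp_intervalIntegrable (d : ℝ → ℝ) (hd : MemLp d 2 (volume : Measure ℝ)) (a b : ℝ) :
    IntervalIntegrable d volume a b := by
  haveI : IsFiniteMeasure (volume.restrict (Set.uIoc a b)) := by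
    constructor
    rw [Measure.restrict_apply_univ, Set.uIoc]
    simp [Real.volume_Ioc]
  rw [intervalIntegrable_iff]
  exact (hd.restrict _).integrable (by norm_num)

lemma holder_fn (u : ℝ → ℝ) (hu : Differentiable ℝ u) (hu' : MemLp (deriv u) 2 (volume : Measure ℝ))
    (x y : ℝ) : |u y - u x| ≤ (eLpNorm (deriv u) 2 volume).toReal * Real.sqrt (|y - x|) := by
  rcases le_total x y with h | h
  · have := intervalIntegral.integral_deriv_eq_sub (f := u)
      (fun t _ => (hu t)) (memLp_intervalIntegrable _ hu' x y)
    rw [← this, abs_of_nonneg (by linarith : (0:ℝ) ≤ y - x)]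
    exact holder_interval _ hu' x y h
  · have := intervalIntegral.integral_deriv_eq_sub (f := u)
      (fun t _ => (hu t)) (memLp_intervalIntegrable _ hu' y x)
    rw [abs_sub_comm, ← this, abs_sub_comm y x, abs_of_nonneg (by linarith : (0:ℝ) ≤ x - y)]
    exact holder_interval _ hu' y x h

lemma tail_bound (u : ℝ → ℝ) (C : ℝ) (hm : Measurable u)
    (hint : Integrable (fun x : ℝ => Real.log (1 + |x|) * u x ^ 2))
    (hC : ∫ x : ℝ, Real.log (1 + |x|) * u x ^ 2 ≤ C) (R : ℝ) (hR : 0 ≤ R) :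
    ENNReal.ofReal (Real.log (1 + R)) * ∫⁻ x in {x : ℝ | R < |x|}, ENNReal.ofReal (u x ^ 2) ≤
      ENNReal.ofReal C := by
  have hnn : ∀ x : ℝ, 0 ≤ Real.log (1 + |x|) := fun x =>
    Real.log_nonneg (by simpa using abs_nonneg x)
  have h0 : ∫⁻ x, ENNReal.ofReal (Real.log (1 + |x|) * u x ^ 2) =
      ENNReal.ofReal (∫ x : ℝ, Real.log (1 + |x|) * u x ^ 2) :=
    (ofReal_integral_eq_lintegral_ofReal hint
      (Filter.Eventually.of_forall fun x => mul_nonneg (hnn x) (sq_nonneg _))).symm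
  have hmeas : Measurable fun x : ℝ => ENNReal.ofReal (Real.log (1 + |x|) * u x ^ 2) := by
    apply Measurable.ennreal_ofReal
    exact ((Real.measurable_log.comp ((measurable_const.add measurable_abs))).mul
      ((hm.pow_const 2)))
  calc ENNReal.ofReal (Real.log (1 + R)) * ∫⁻ x in {x : ℝ | R < |x|}, ENNReal.ofReal (u x ^ 2)
      = ∫⁻ x in {x : ℝ | R < |x|},
          ENNReal.ofReal (Real.log (1 + R)) * ENNReal.ofReal (u x ^ 2) :=
        (lintegral_const_mul' _ _ ENNReal.ofReal_ne_top).symm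
    _ ≤ ∫⁻ x in {x : ℝ | R < |x|}, ENNReal.ofReal (Real.log (1 + |x|) * u x ^ 2) := by
        apply setLIntegral_mono hmeas
        intro x hx
        rw [← ENNReal.ofReal_mul (Real.log_nonneg (by linarith))]
        apply ENNReal.ofReal_le_ofReal
        apply mul_le_mul_of_nonneg_right _ (sq_nonneg _)
        apply Real.log_le_log (by linarith) (by simp only [Set.mem_setOf_eq] at hx; linarith)
    _ ≤ ∫⁻ x, ENNReal.ofReal (Real.log (1 + |x|) * u x ^ 2) :=
        setLIntegral_le_lintegral _ _
    _ = ENNReal.ofReal (∫ x : ℝ, Real.log (1 + |x|) * u x ^ 2) := h0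
    _ ≤ ENNReal.ofReal C := ENNReal.ofReal_le_ofReal hC

lemma eLpNorm_two_eq (u : ℝ → ℝ) (μ : Measure ℝ) :
    eLpNorm u 2 μ = (∫⁻ x, ENNReal.ofReal (u x ^ 2) ∂μ) ^ (1/2 : ℝ) := by
  rw [eLpNorm_eq_lintegral_rpow_enorm_toReal (by norm_num) (by norm_num)]
  congr 1
  · apply lintegral_congr
    intro x
    rw [← ofReal_norm,
      ENNReal.ofReal_rpow_of_nonneg (norm_nonneg _) (by norm_num)]
    congr 1
    rw [ENNReal.toReal_ofNat, Real.rpow_two, Real.norm_eq_abs, ← sq_abs]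
    simp [abs_abs, sq_abs]

lemma ptwise_bound (u : ℝ → ℝ) (C : ℝ) (hC : 0 ≤ C)
    (hu : Differentiable ℝ u) (huL2 : MemLp u 2 (volume : Measure ℝ))
    (hu' : MemLp (deriv u) 2 (volume : Measure ℝ))
    (hd : (eLpNorm (deriv u) 2 volume).toReal ≤ Real.sqrt C)
    (hli : Integrable (fun x : ℝ => Real.log (1 + |x|) * u x ^ 2))
    (hle : ∫ x : ℝ, Real.log (1 + |x|) * u x ^ 2 ≤ C) (x : ℝ) :
    |u x| ≤ Real.sqrt (C / Real.log 2 + 1) + Real.sqrt C * Real.sqrt (2 * |x| + 2) := by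
  set J : Set ℝ := Set.Icc (|x| + 1) (|x| + 2) with hJ
  have hJm : MeasurableSet J := measurableSet_Icc
  have hvolJ : volume J = 1 := by
    rw [hJ, Real.volume_Icc]
    norm_num
  have hsq : Integrable (fun y : ℝ => u y ^ 2) := huL2.integrable_sq
  have hlog2 : (0:ℝ) < Real.log 2 := Real.log_pos (by norm_num)
  -- ∫_J u² ≤ C / log 2
  have hJint : ∫ y in J, u y ^ 2 ≤ C / Real.log 2 := by
    rw [le_div_iff₀ hlog2, mul_comm]
    have h1 : Real.log 2 * ∫ y in J, u y ^ 2 = ∫ y in J, Real.log 2 * u y ^ 2 := by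
      rw [integral_const_mul]
    rw [mul_comm (Real.log 2), ← integral_mul_const]
    have h2 : ∫ y in J, u y ^ 2 * Real.log 2 ≤ ∫ y in J, Real.log (1 + |y|) * u y ^ 2 := by
      apply setIntegral_mono_on (hsq.integrableOn.mul_const _) hli.integrableOn hJm
      intro y hy
      rw [mul_comm]
      apply mul_le_mul_of_nonneg_right _ (sq_nonneg _)
      apply Real.log_le_log (by norm_num)
      have : (1:ℝ) ≤ y := le_trans (by linarith [abs_nonneg x]) hy.1
      rw [abs_of_nonneg (by linarith)]; linarith
    refine h2.trans (le_trans (setIntegral_le_integral hli ?_) hle)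
    exact Filter.Eventually.of_forall fun y =>
      mul_nonneg (Real.log_nonneg (by linarith [abs_nonneg y])) (sq_nonneg _)
  -- find a good point y in J
  have hy : ∃ y ∈ J, u y ^ 2 ≤ C / Real.log 2 + 1 := by
    by_contra hcon
    push_neg at hcon
    have := setIntegral_ge_of_const_le_real (c := C / Real.log 2 + 1) hJm
      (by rw [hvolJ]; exact ENNReal.one_ne_top) (fun y hy => (hcon y hy).le) hsq.integrableOn
    rw [measureReal_def, hvolJ] at this
    simp at this
    linarith
  obtain ⟨y, hyJ, hyle⟩ := hy
  have h3 : |u y| ≤ Real.sqrt (C / Real.log 2 + 1) := by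
    rw [← Real.sqrt_sq_eq_abs]
    exact Real.sqrt_le_sqrt hyle
  have h4 : |u x - u y| ≤ Real.sqrt C * Real.sqrt (2 * |x| + 2) := by
    have := holder_fn u hu hu' y x
    refine this.trans ?_
    apply mul_le_mul hd (Real.sqrt_le_sqrt ?_) (Real.sqrt_nonneg _) (Real.sqrt_nonneg _)
    have h5 : |x - y| ≤ 2 * |x| + 2 := by
      have h6 : |x| + 1 ≤ y := hyJ.1
      have h7 : y ≤ |x| + 2 := hyJ.2
      have := abs_le.mp (le_refl |x|)
      rw [abs_sub_comm, abs_of_nonneg (by cases abs_cases x <;> linarith)]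
      cases abs_cases x <;> linarith
    simpa [abs_sub_comm] using h5
  calc |u x| ≤ |u y| + |u x - u y| := by
        have := abs_sub_abs_le_abs_sub (u x) (u y); linarith [abs_sub (u x) (u y)]
    _ ≤ _ := add_le_add h3 h4


/-- Compactness of the embedding `X ↪ L²_even(ℝ)`, where `X` is the space of even
`H¹(ℝ)` functions with finite logarithmically weighted `L²` norm: every sequence that is
bounded in the `X`-norm has a subsequence converging strongly in `L²(ℝ)` to an even
limit. -/
theorem X_embeds_compactly_in_L2_even (f : ℕ → ℝ → ℝ) (C : ℝ)
    (heven : ∀ n, ∀ x, f n (-x) = f n x)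
    (hdiff : ∀ n, Differentiable ℝ (f n))
    (hL2 : ∀ n, MemLp (f n) 2)
    (hderivL2 : ∀ n, MemLp (deriv (f n)) 2)
    (hlog : ∀ n, Integrable (fun x : ℝ => Real.log (1 + |x|) * (f n x) ^ 2))
    (hbound : ∀ n,
      ((eLpNorm (f n) 2 volume).toReal ^ 2 + (eLpNorm (deriv (f n)) 2 volume).toReal ^ 2
        + ∫ x : ℝ, Real.log (1 + |x|) * (f n x) ^ 2) ≤ C) :
    ∃ (φ : ℕ → ℕ) (g : ℝ → ℝ), StrictMono φ ∧ MemLp g 2 ∧ (∀ x, g (-x) = g x) ∧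
      Tendsto (fun k => eLpNorm (fun x => f (φ k) x - g x) 2 volume) atTop (𝓝 0) := by
  have hIlog : ∀ n, 0 ≤ ∫ x : ℝ, Real.log (1 + |x|) * (f n x) ^ 2 := fun n =>
    integral_nonneg fun x => mul_nonneg (Real.log_nonneg (by linarith [abs_nonneg x])) (sq_nonneg _)
  have hC0 : 0 ≤ C :=
    le_trans (by positivity : (0:ℝ) ≤ (eLpNorm (f 0) 2 volume).toReal ^ 2
        + (eLpNorm (deriv (f 0)) 2 volume).toReal ^ 2) (by linarith [hbound 0, hIlog 0])
  set M := Real.sqrt C with hM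
  have hM0 : 0 ≤ M := Real.sqrt_nonneg _
  have hA2 : ∀ n, (eLpNorm (f n) 2 volume).toReal ^ 2 ≤ C := fun n => by
    nlinarith [hbound n, hIlog n, sq_nonneg ((eLpNorm (deriv (f n)) 2 volume).toReal)]
  have hB : ∀ n, (eLpNorm (deriv (f n)) 2 volume).toReal ≤ M := by
    intro n
    have h2 : (eLpNorm (deriv (f n)) 2 volume).toReal ^ 2 ≤ C := by
      nlinarith [hbound n, hIlog n, sq_nonneg ((eLpNorm (f n) 2 volume).toReal)]
    calc (eLpNorm (deriv (f n)) 2 volume).toReal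
        = Real.sqrt ((eLpNorm (deriv (f n)) 2 volume).toReal ^ 2) :=
          (Real.sqrt_sq ENNReal.toReal_nonneg).symm
      _ ≤ Real.sqrt C := Real.sqrt_le_sqrt h2
  have hI : ∀ n, ∫ x : ℝ, Real.log (1 + |x|) * (f n x) ^ 2 ≤ C := fun n => by
    nlinarith [hbound n, sq_nonneg ((eLpNorm (f n) 2 volume).toReal),
      sq_nonneg ((eLpNorm (deriv (f n)) 2 volume).toReal)]
  have hHold : ∀ n x y, |f n y - f n x| ≤ M * Real.sqrt |y - x| := fun n x y =>
    (holder_fn (f n) (hdiff n) (hderivL2 n) x y).trans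
      (mul_le_mul_of_nonneg_right (hB n) (Real.sqrt_nonneg _))
  set K : ℝ → ℝ := fun x => Real.sqrt (C / Real.log 2 + 1) + M * Real.sqrt (2 * |x| + 2) with hKdef
  have hK : ∀ (x : ℝ) n, |f n x| ≤ K x := fun x n =>
    ptwise_bound (f n) C hC0 (hdiff n) (hL2 n) (hderivL2 n) (hB n) (hlog n) (hI n) x
  -- extract a subsequence converging at all rationals
  obtain ⟨u, -, φ, hφ, hconv⟩ :=
    (isCompact_univ_pi (fun q : ℚ => isCompact_Icc (a := -(K (q:ℝ))) (b := K (q:ℝ)))).tendsto_subseq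
      (x := fun n => fun q : ℚ => f n (q:ℝ))
      (fun n => Set.mem_univ_pi.2 fun q => abs_le.mp (hK (q:ℝ) n))
  have hq : ∀ q : ℚ, Tendsto (fun k => f (φ k) (q:ℝ)) atTop (𝓝 (u q)) := fun q =>
    tendsto_pi_nhds.mp hconv q
  -- pointwise convergence everywhere
  have hcauchy : ∀ x : ℝ, CauchySeq (fun k => f (φ k) x) := by
    intro x
    rw [Metric.cauchySeq_iff]
    intro ε hε
    set δ := (ε / (3 * (M + 1))) ^ 2 with hδdef
    have hδ : 0 < δ := by positivity
    obtain ⟨q, hq1, hq2⟩ := exists_rat_btwn (sub_lt_self x hδ)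
    have hxq : |x - (q:ℝ)| ≤ δ := by rw [abs_of_nonneg (by linarith)]; linarith
    have hMq : ∀ k, |f (φ k) x - f (φ k) (q:ℝ)| ≤ ε / 3 := by
      intro k
      refine (hHold (φ k) (q:ℝ) x).trans ?_
      have h1 : Real.sqrt |x - (q:ℝ)| ≤ ε / (3 * (M + 1)) := by
        rw [show ε / (3 * (M+1)) = Real.sqrt δ by
          rw [hδdef, Real.sqrt_sq (by positivity)]]
        exact Real.sqrt_le_sqrt hxq
      calc M * Real.sqrt |x - (q:ℝ)| ≤ M * (ε / (3 * (M + 1))) := by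
            exact mul_le_mul_of_nonneg_left h1 hM0
        _ ≤ ε / 3 := by
            rw [mul_div_assoc', div_le_div_iff₀ (by positivity) (by norm_num)]
            nlinarith
    obtain ⟨N, hN⟩ := Metric.cauchySeq_iff.mp (hq q).cauchySeq (ε / 3) (by positivity)
    refine ⟨N, fun m hm n hn => ?_⟩
    have h2 := hN m hm n hn
    rw [Real.dist_eq] at h2 ⊢
    calc |f (φ m) x - f (φ n) x|
        ≤ |f (φ m) x - f (φ m) (q:ℝ)| + |f (φ m) (q:ℝ) - f (φ n) (q:ℝ)|
          + |f (φ n) (q:ℝ) - f (φ n) x| := by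
          have := abs_sub_le (f (φ m) x) (f (φ m) (q:ℝ)) (f (φ n) x)
          have := abs_sub_le (f (φ m) (q:ℝ)) (f (φ n) (q:ℝ)) (f (φ n) x)
          linarith
      _ < ε := by
          have := hMq m
          have h3 := hMq n
          rw [abs_sub_comm] at h3
          linarith
  have hlim : ∀ x : ℝ, ∃ L : ℝ, Tendsto (fun k => f (φ k) x) atTop (𝓝 L) := fun x =>
    cauchySeq_tendsto_of_complete (hcauchy x)
  choose g hg using hlim
  have hgeven : ∀ x, g (-x) = g x := by
    intro x
    have h1 := hg (-x)
    have h2 := hg x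
    have heq : (fun k => f (φ k) (-x)) = fun k => f (φ k) x := funext fun k => heven (φ k) x
    rw [heq] at h1
    exact tendsto_nhds_unique h1 h2
  have hfm : ∀ n, Measurable (f n) := fun n => (hdiff n).continuous.measurable
  have hgm : Measurable g :=
    measurable_of_tendsto_metrizable (fun k => hfm (φ k)) (tendsto_pi_nhds.mpr hg)
  -- Hölder estimate for g
  have hgHold : ∀ x y, |g y - g x| ≤ M * Real.sqrt |y - x| := by
    intro x y
    have ht : Tendsto (fun k => |f (φ k) y - f (φ k) x|) atTop (𝓝 |g y - g x|) :=
      ((hg y).sub (hg x)).abs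
    exact le_of_tendsto ht (Eventually.of_forall fun k => hHold (φ k) x y)
  -- uniform convergence on compact intervals
  have hunif : ∀ R : ℝ, ∀ ε : ℝ, 0 < ε →
      ∀ᶠ k in atTop, ∀ x ∈ Set.Icc (-R) R, |f (φ k) x - g x| ≤ ε := by
    intro R ε hε
    set δ := (ε / (3 * (M + 1))) ^ 2 with hδdef
    have hδ : 0 < δ := by positivity
    have hsqδ : Real.sqrt δ = ε / (3 * (M + 1)) := by
      rw [hδdef, Real.sqrt_sq (by positivity)]
    have hM3 : ∀ s : ℝ, |s| ≤ δ → M * Real.sqrt |s| ≤ ε / 3 := by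
      intro s hs
      calc M * Real.sqrt |s| ≤ M * (ε / (3 * (M + 1))) := by
            apply mul_le_mul_of_nonneg_left _ hM0
            rw [← hsqδ]; exact Real.sqrt_le_sqrt hs
        _ ≤ ε / 3 := by
            rw [mul_div_assoc', div_le_div_iff₀ (by positivity) (by norm_num)]
            nlinarith
    have hcover : Set.Icc (-R) R ⊆ ⋃ q : ℚ, Set.Ioo ((q:ℝ) - δ) ((q:ℝ) + δ) := by
      intro x _
      obtain ⟨q, h1, h2⟩ := exists_rat_btwn (sub_lt_self x hδ)
      exact Set.mem_iUnion.2 ⟨q, ⟨by linarith, by linarith⟩⟩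
    obtain ⟨T, hT⟩ := isCompact_Icc.elim_finite_subcover _ (fun q : ℚ => isOpen_Ioo) hcover
    have hev : ∀ᶠ k in atTop, ∀ q ∈ T, |f (φ k) (q:ℝ) - g (q:ℝ)| ≤ ε / 3 := by
      rw [eventually_all_finset]
      intro q _
      have h1 := Metric.tendsto_atTop.mp (hg (q:ℝ)) (ε / 3) (by positivity)
      obtain ⟨N, hN⟩ := h1
      rw [eventually_atTop]
      exact ⟨N, fun k hk => by have := hN k hk; rw [Real.dist_eq] at this; linarith⟩
    filter_upwards [hev] with k hk x hx
    obtain ⟨q, hqT, hxq⟩ := Set.mem_iUnion₂.mp (hT hx)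
    have hxq' : |x - (q:ℝ)| ≤ δ := by
      rw [abs_le]; constructor <;> [linarith [hxq.1]; linarith [hxq.2]]
    calc |f (φ k) x - g x|
        ≤ |f (φ k) x - f (φ k) (q:ℝ)| + |f (φ k) (q:ℝ) - g (q:ℝ)| + |g (q:ℝ) - g x| := by
          have := abs_sub_le (f (φ k) x) (f (φ k) (q:ℝ)) (g x)
          have := abs_sub_le (f (φ k) (q:ℝ)) (g (q:ℝ)) (g x)
          linarith
      _ ≤ ε / 3 + ε / 3 + ε / 3 := by
          have e1 : |f (φ k) x - f (φ k) (q:ℝ)| ≤ ε / 3 :=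
            (hHold (φ k) (q:ℝ) x).trans (hM3 (x - (q:ℝ)) hxq')
          have e2 : |g (q:ℝ) - g x| ≤ ε / 3 :=
            (hgHold x (q:ℝ)).trans (hM3 ((q:ℝ) - x) (by rwa [abs_sub_comm]))
          exact add_le_add (add_le_add e1 (hk q hqT)) e2
      _ = ε := by ring
    -- global lintegral bound
  have hglob : ∀ n, ∫⁻ x, ENNReal.ofReal (f n x ^ 2) ≤ ENNReal.ofReal C := by
    intro n
    have h1 : (∫⁻ x, ENNReal.ofReal (f n x ^ 2)) = eLpNorm (f n) 2 volume ^ 2 := by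
      rw [eLpNorm_two_eq, ← ENNReal.rpow_natCast _ 2, ← ENNReal.rpow_mul]
      norm_num
    rw [h1, ← ENNReal.ofReal_toReal (hL2 n).eLpNorm_ne_top,
      ← ENNReal.ofReal_pow ENNReal.toReal_nonneg]
    exact ENNReal.ofReal_le_ofReal (hA2 n)
  have hsqconv : ∀ x, Tendsto (fun k => ENNReal.ofReal (f (φ k) x ^ 2)) atTop
      (𝓝 (ENNReal.ofReal (g x ^ 2))) := fun x =>
    (ENNReal.continuous_ofReal.tendsto _).comp ((hg x).pow 2)
  have hmeas_sq : ∀ k, Measurable fun x => ENNReal.ofReal (f (φ k) x ^ 2) := fun k =>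
    ((hfm (φ k)).pow_const 2).ennreal_ofReal
  have hFatou : ∀ (μ : Measure ℝ) (b : ℝ≥0∞),
      (∀ k, ∫⁻ x, ENNReal.ofReal (f (φ k) x ^ 2) ∂μ ≤ b) →
      ∫⁻ x, ENNReal.ofReal (g x ^ 2) ∂μ ≤ b := by
    intro μ b hb
    have h1 : ∫⁻ x, ENNReal.ofReal (g x ^ 2) ∂μ ≤
        Filter.liminf (fun k => ∫⁻ x, ENNReal.ofReal (f (φ k) x ^ 2) ∂μ) atTop := by
      refine le_trans (le_of_eq ?_) (lintegral_liminf_le hmeas_sq)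
      exact lintegral_congr fun x => ((hsqconv x).liminf_eq).symm
    refine h1.trans ?_
    calc Filter.liminf (fun k => ∫⁻ x, ENNReal.ofReal (f (φ k) x ^ 2) ∂μ) atTop
        ≤ Filter.liminf (fun _ : ℕ => b) atTop :=
          Filter.liminf_le_liminf (Filter.Eventually.of_forall hb)
      _ = b := Filter.liminf_const b
  have hgglob : ∫⁻ x, ENNReal.ofReal (g x ^ 2) ≤ ENNReal.ofReal C := hFatou volume _ (fun k => hglob (φ k))
  have hgL2 : MemLp g 2 volume := by
    refine ⟨hgm.aestronglyMeasurable, ?_⟩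
    rw [eLpNorm_two_eq]
    exact lt_of_le_of_lt (ENNReal.rpow_le_rpow hgglob (by norm_num))
      (ENNReal.rpow_lt_top_of_nonneg (by norm_num) ENNReal.ofReal_ne_top)
  refine ⟨φ, g, hφ, hgL2, hgeven, ?_⟩
  rw [ENNReal.tendsto_atTop_zero]
  intro ε hε
  set δ := (min ε 1).toReal with hδdef
  have hmin_ne_top : min ε 1 ≠ ⊤ := by
    exact ne_top_of_le_ne_top ENNReal.one_ne_top (min_le_right _ _)
  have hδpos : 0 < δ := ENNReal.toReal_pos (lt_min hε zero_lt_one).ne' hmin_ne_top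
  have hδle : ENNReal.ofReal δ ≤ ε := by
    rw [hδdef, ENNReal.ofReal_toReal hmin_ne_top]; exact min_le_left _ _
  set L := (C + 1) / ((δ / 4) ^ 2) with hL
  have hLpos : 0 < L := by positivity
  set R := Real.exp L with hR
  have hRpos : 0 < R := Real.exp_pos L
  have hR1 : 1 ≤ R := by
    rw [hR, show (1:ℝ) = Real.exp 0 by simp]
    exact Real.exp_le_exp.mpr hLpos.le
  have hlogR : L ≤ Real.log (1 + R) := by
    calc L = Real.log (Real.exp L) := (Real.log_exp L).symm
      _ ≤ Real.log (1 + R) := Real.log_le_log (Real.exp_pos L) (by rw [hR]; linarith [Real.exp_pos L])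
  set tail : Set ℝ := {x : ℝ | R < |x|} with htails
  have htailm : MeasurableSet tail := measurableSet_lt measurable_const measurable_abs
  have htail : ∀ n, ∫⁻ x in tail, ENNReal.ofReal (f n x ^ 2) ≤ ENNReal.ofReal ((δ / 4) ^ 2) := by
    intro n
    have hlogpos : 0 < Real.log (1 + R) := lt_of_lt_of_le hLpos hlogR
    have h1 := tail_bound (f n) C (hfm n) (hlog n) (hI n) R (by linarith)
    have h2 : ENNReal.ofReal (Real.log (1 + R)) * ∫⁻ x in tail, ENNReal.ofReal (f n x ^ 2) ≤
        ENNReal.ofReal (Real.log (1 + R)) * ENNReal.ofReal ((δ / 4) ^ 2) := by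
      refine h1.trans ?_
      rw [← ENNReal.ofReal_mul hlogpos.le]
      apply ENNReal.ofReal_le_ofReal
      calc C ≤ C + 1 := by linarith
        _ = L * ((δ / 4) ^ 2) := by rw [hL]; field_simp
        _ ≤ Real.log (1 + R) * ((δ / 4) ^ 2) :=
            mul_le_mul_of_nonneg_right hlogR (by positivity)
    exact (ENNReal.mul_le_mul_iff_right (ENNReal.ofReal_pos.mpr hlogpos).ne'
      ENNReal.ofReal_ne_top).mp h2
  have htailg : ∫⁻ x in tail, ENNReal.ofReal (g x ^ 2) ≤ ENNReal.ofReal ((δ / 4) ^ 2) :=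
    hFatou (volume.restrict tail) _ (fun k => htail (φ k))
  have htail' : ∀ u : ℝ → ℝ,
      (∫⁻ x in tail, ENNReal.ofReal (u x ^ 2)) ≤ ENNReal.ofReal ((δ / 4) ^ 2) →
      eLpNorm (tail.indicator u) 2 volume ≤ ENNReal.ofReal (δ / 4) := by
    intro u hu
    rw [eLpNorm_indicator_eq_eLpNorm_restrict htailm, eLpNorm_two_eq]
    calc (∫⁻ x in tail, ENNReal.ofReal (u x ^ 2)) ^ (1/2 : ℝ)
        ≤ (ENNReal.ofReal ((δ / 4) ^ 2)) ^ (1/2 : ℝ) := ENNReal.rpow_le_rpow hu (by norm_num)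
      _ = ENNReal.ofReal (δ / 4) := by
          rw [ENNReal.ofReal_rpow_of_nonneg (by positivity) (by norm_num)]
          congr 1
          rw [← Real.sqrt_eq_rpow, Real.sqrt_sq (by positivity)]
  set s : Set ℝ := Set.Icc (-R) R with hsdef
  have hsm : MeasurableSet s := measurableSet_Icc
  have hsc : sᶜ = tail := by
    ext x
    simp only [hsdef, htails, Set.mem_compl_iff, Set.mem_Icc, Set.mem_setOf_eq]
    rw [← abs_le, not_le]
  set ε₁ := δ / (4 * (Real.sqrt (2 * R) + 1)) with hε₁def
  have hsqrtR : 0 ≤ Real.sqrt (2 * R) := Real.sqrt_nonneg _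
  have hε₁pos : 0 < ε₁ := by rw [hε₁def]; positivity
  obtain ⟨N, hN⟩ := eventually_atTop.mp (hunif R ε₁ hε₁pos)
  refine ⟨N, fun k hk => ?_⟩
  have hdm : AEStronglyMeasurable (fun x => f (φ k) x - g x) volume :=
    ((hfm (φ k)).sub hgm).aestronglyMeasurable
  have hfsm : AEStronglyMeasurable (f (φ k)) volume := (hfm (φ k)).aestronglyMeasurable
  have hgsm : AEStronglyMeasurable g volume := hgm.aestronglyMeasurable
  have hcompact : eLpNorm (s.indicator fun x => f (φ k) x - g x) 2 volume ≤
      ENNReal.ofReal (δ / 4) := by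
    rw [eLpNorm_indicator_eq_eLpNorm_restrict hsm]
    have hbd : ∀ᵐ x ∂(volume.restrict s), ‖f (φ k) x - g x‖ ≤ ε₁ := by
      rw [ae_restrict_iff' hsm]
      exact Filter.Eventually.of_forall fun x hx => by
        rw [Real.norm_eq_abs]; exact hN k hk x hx
    refine (eLpNorm_le_of_ae_bound hbd).trans ?_
    have hμs : (volume.restrict s) Set.univ = ENNReal.ofReal (2 * R) := by
      rw [Measure.restrict_apply_univ, hsdef, Real.volume_Icc]
      congr 1; ring
    rw [hμs]
    calc ENNReal.ofReal (2 * R) ^ (2 : ℝ≥0∞).toReal⁻¹ * ENNReal.ofReal ε₁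
        = ENNReal.ofReal (Real.sqrt (2 * R)) * ENNReal.ofReal ε₁ := by
          congr 1
          rw [ENNReal.toReal_ofNat, show ((2:ℝ))⁻¹ = (1/2 : ℝ) by norm_num,
            ENNReal.ofReal_rpow_of_nonneg (by positivity) (by norm_num),
            ← Real.sqrt_eq_rpow]
      _ = ENNReal.ofReal (Real.sqrt (2 * R) * ε₁) := by
          rw [ENNReal.ofReal_mul hsqrtR]
      _ ≤ ENNReal.ofReal (δ / 4) := by
          apply ENNReal.ofReal_le_ofReal
          rw [hε₁def, mul_div_assoc', div_le_div_iff₀ (by positivity) (by norm_num)]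
          nlinarith [hδpos.le]
  have htailpart : eLpNorm (sᶜ.indicator fun x => f (φ k) x - g x) 2 volume ≤
      ENNReal.ofReal (δ / 4) + ENNReal.ofReal (δ / 4) := by
    rw [hsc]
    have hind : tail.indicator (fun x => f (φ k) x - g x) =
        fun x => tail.indicator (f (φ k)) x - tail.indicator g x := by
      funext x
      by_cases hx : x ∈ tail <;> simp [hx]
    rw [hind]
    refine (eLpNorm_sub_le (hfsm.indicator htailm) (hgsm.indicator htailm) one_le_two).trans ?_
    exact add_le_add (htail' _ (htail (φ k))) (htail' _ htailg)
  calc eLpNorm (fun x => f (φ k) x - g x) 2 volume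
      = eLpNorm ((s.indicator fun x => f (φ k) x - g x)
          + (sᶜ.indicator fun x => f (φ k) x - g x)) 2 volume := by
        rw [Set.indicator_self_add_compl]
    _ ≤ eLpNorm (s.indicator fun x => f (φ k) x - g x) 2 volume
        + eLpNorm (sᶜ.indicator fun x => f (φ k) x - g x) 2 volume :=
        eLpNorm_add_le (hdm.indicator hsm) (hdm.indicator hsm.compl) one_le_two
    _ ≤ ENNReal.ofReal (δ / 4) + (ENNReal.ofReal (δ / 4) + ENNReal.ofReal (δ / 4)) :=
        add_le_add hcompact htailpart
    _ ≤ ENNReal.ofReal δ := by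
        rw [← ENNReal.ofReal_add (by positivity) (by positivity),
          ← ENNReal.ofReal_add (by positivity) (by positivity)]
        apply ENNReal.ofReal_le_ofReal
        linarith
    _ ≤ ε := hδle
end

section
/- Let f ∈ L¹(ℝ) with f ≥ 0 and ‖f‖_{L¹} > 0, let p ≥ 1 and R > 0, and suppose p‖f‖_{L¹} < π. Then ∫_{B_R} exp( (p/π) ∫_ℝ log((1+|y|)/|x−y|) f(y) dy ) dx < +∞, where B_R = (−R, R). -/
open MeasureTheory Filter Set Topology

open Real Metric

/-!
Put `m = ∫ f` and `α = p m / π < 1`. Jensen's inequality for the probability density `f / m`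
bounds the integrand at `x` by `m⁻¹ ∫ ((1 + |y|) / |x - y|) ^ α f(y) dy`. For `|x| < R` the kernel
is at most `(2 + R) + (1 + R) |x - y| ^ (-α) 𝟙_{|x - y| < 1}`, so on `B_R × ℝ` the integrand of
this majorant is dominated by a convolution integrand of `|f|` with an integrable function, and
Fubini makes the majorant integrable on `B_R`.
-/

section Jensen

variable {Ω : Type*} [MeasurableSpace Ω] {μ : Measure Ω} {u w : Ω → ℝ}

theorem exp_integral_mul_div_le_integral_exp_mul_div (hw0 : 0 ≤ᵐ[μ] w) (hw : Integrable w μ)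
    (hm : 0 < ∫ y, w y ∂μ) (hu : Integrable (fun y ↦ u y * w y) μ)
    (he : Integrable (fun y ↦ exp (u y) * w y) μ) :
    exp ((∫ y, u y * w y ∂μ) / ∫ y, w y ∂μ) ≤ (∫ y, exp (u y) * w y ∂μ) / ∫ y, w y ∂μ := by
  set m := ∫ y, w y ∂μ
  set c := (∫ y, u y * w y ∂μ) / m
  have tangent : ∀ᵐ y ∂μ, exp c * (w y + u y * w y - c * w y) ≤ exp (u y) * w y := by
    filter_upwards [hw0] with y hy
    calc exp c * (w y + u y * w y - c * w y) = exp c * ((u y - c + 1) * w y) := by ring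
      _ ≤ exp c * (exp (u y - c) * w y) := by gcongr; exact add_one_le_exp _
      _ = exp (u y) * w y := by rw [← mul_assoc, ← exp_add, add_sub_cancel]
  have hwu : Integrable (fun y ↦ w y + u y * w y) μ := hw.add hu
  have hint : ∫ y, exp c * (w y + u y * w y - c * w y) ∂μ = exp c * m := by
    rw [integral_const_mul, integral_sub hwu (hw.const_mul c), integral_add hw hu,
      integral_const_mul]
    change exp c * (m + _ - (∫ y, u y * w y ∂μ) / m * m) = _
    rw [div_mul_cancel₀ _ hm.ne']
    ring
  rw [le_div_iff₀ hm, ← hint]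
  exact integral_mono_ae ((hwu.sub (hw.const_mul c)).const_mul _) he tangent

theorem integrable_mul_of_integrable_exp_mul {c : ℝ} (hw0 : 0 ≤ᵐ[μ] w) (hw : Integrable w μ)
    (hu : AEStronglyMeasurable u μ) (hlow : ∀ᵐ y ∂μ, c ≤ u y)
    (he : Integrable (fun y ↦ exp (u y) * w y) μ) : Integrable (fun y ↦ u y * w y) μ := by
  refine (he.add (hw.const_mul |c|)).mono' (hu.mul hw.aestronglyMeasurable) ?_
  filter_upwards [hw0, hlow] with y hy hcy
  have hu_le : |u y| ≤ exp (u y) + |c| :=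
    abs_le.2 ⟨by linarith [neg_abs_le c, exp_pos (u y)],
      by linarith [add_one_le_exp (u y), abs_nonneg c]⟩
  rw [norm_mul, norm_of_nonneg hy, Real.norm_eq_abs]
  simp only [Pi.add_apply, ← add_mul]
  exact mul_le_mul_of_nonneg_right hu_le hy

theorem exp_mul_integral_log_mul_le {g : Ω → ℝ} {α c : ℝ} (hα : 0 ≤ α)
    (hg : AEMeasurable g μ) (hg0 : ∀ᵐ y ∂μ, 0 < g y) (hlow : ∀ᵐ y ∂μ, c ≤ log (g y))
    (hw0 : 0 ≤ᵐ[μ] w) (hw : Integrable w μ) (hm : 0 < ∫ y, w y ∂μ)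
    (hgw : Integrable (fun y ↦ g y ^ α * w y) μ) :
    exp (α / (∫ y, w y ∂μ) * ∫ y, log (g y) * w y ∂μ) ≤
      (∫ y, g y ^ α * w y ∂μ) / ∫ y, w y ∂μ := by
  have hexp : (fun y ↦ exp (α * log (g y)) * w y) =ᵐ[μ] fun y ↦ g y ^ α * w y := by
    filter_upwards [hg0] with y hy
    rw [rpow_def_of_pos hy, mul_comm (log _)]
  have he := hgw.congr hexp.symm
  have hlog : AEStronglyMeasurable (fun y ↦ α * log (g y)) μ :=
    ((measurable_log.comp_aemeasurable hg).const_mul α).aestronglyMeasurable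
  have hu : Integrable (fun y ↦ α * log (g y) * w y) μ :=
    integrable_mul_of_integrable_exp_mul hw0 hw hlog
      (hlow.mono fun y hy ↦ mul_le_mul_of_nonneg_left hy hα) he
  have jensen := exp_integral_mul_div_le_integral_exp_mul_div hw0 hw hm hu he
  simp_rw [mul_assoc, integral_const_mul, integral_congr_ae hexp] at jensen
  rwa [div_mul_eq_mul_div]

end Jensen

theorem neg_log_one_add_abs_le_log_div_abs_sub (x y : ℝ) :
    -log (1 + |x|) ≤ log ((1 + |y|) / |x - y|) := by
  rcases eq_or_ne x y with rfl | hxy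
  -- at `y = x` the junk values `a / 0 = 0` and `log 0 = 0` make the right side `0`
  · simp only [sub_self, abs_zero, div_zero, log_zero, neg_nonpos]
    exact log_nonneg (by linarith [abs_nonneg x])
  have hxy' : 0 < |x - y| := abs_pos.2 (sub_ne_zero.2 hxy)
  have hdist : |x - y| ≤ (1 + |x|) * (1 + |y|) := by
    nlinarith [abs_sub x y, abs_nonneg x, abs_nonneg y, mul_nonneg (abs_nonneg x) (abs_nonneg y)]
  rw [← log_inv]
  refine log_le_log (by positivity) ?_
  rw [le_div_iff₀ hxy', inv_mul_le_iff₀ (by positivity)]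
  exact hdist

theorem div_abs_sub_rpow_le {x y R α : ℝ} (hx : |x| ≤ R) (hα0 : 0 ≤ α) (hα1 : α ≤ 1) :
    ((1 + |y|) / |x - y|) ^ α ≤ (1 + R) * |x - y| ^ (-α) + 1 := by
  have hR : 0 ≤ R := (abs_nonneg x).trans hx
  rcases eq_or_ne x y with rfl | hxy
  · simp only [sub_self, abs_zero, div_zero]
    have := zero_rpow_le_one α
    have := rpow_nonneg (le_refl (0 : ℝ)) (-α)
    nlinarith
  have hxy' : 0 < |x - y| := abs_pos.2 (sub_ne_zero.2 hxy)
  have hnum : 1 + |y| ≤ (1 + R) + |x - y| := by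
    linarith [abs_sub_abs_le_abs_sub y x, abs_sub_comm y x]
  calc ((1 + |y|) / |x - y|) ^ α ≤ ((1 + R) / |x - y| + 1) ^ α := by
        gcongr
        rwa [div_add_one hxy'.ne', div_le_div_iff_of_pos_right hxy']
    _ ≤ ((1 + R) / |x - y|) ^ α + 1 ^ α :=
        rpow_add_le_add_rpow (by positivity) zero_le_one hα0 hα1
    _ = (1 + R) ^ α * |x - y| ^ (-α) + 1 := by
        rw [one_rpow, div_rpow (by positivity) hxy'.le, rpow_neg hxy'.le, div_eq_mul_inv]
    _ ≤ (1 + R) * |x - y| ^ (-α) + 1 := by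
        gcongr
        exact rpow_le_self_of_one_le (by linarith) hα1

theorem abs_rpow_neg_le_one_add_indicator {α : ℝ} (hα : 0 ≤ α) (t : ℝ) :
    |t| ^ (-α) ≤ 1 + (ball 0 1).indicator (fun s ↦ |s| ^ (-α)) t := by
  by_cases ht : t ∈ ball (0 : ℝ) 1
  · rw [indicator_of_mem ht]
    linarith
  · rw [indicator_of_notMem ht, add_zero]
    rw [mem_ball_zero_iff, not_lt, Real.norm_eq_abs] at ht
    exact rpow_le_one_of_one_le_of_nonpos ht (neg_nonpos.2 hα)

theorem integrable_indicator_ball_abs_rpow_neg {α : ℝ} (hα : α < 1) :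
    Integrable ((ball (0 : ℝ) 1).indicator fun s ↦ |s| ^ (-α)) := by
  rw [integrable_indicator_iff measurableSet_ball]
  refine integrableOn_ball_of_norm_le_rpow (C := 1) (α := α) (μ := volume) (by simp) (by simpa) ?_
    ((continuous_abs.measurable.pow_const _).aestronglyMeasurable)
  refine ae_of_all _ fun s ↦ ?_
  rw [one_mul, Real.norm_eq_abs, abs_of_nonneg (rpow_nonneg (abs_nonneg s) _), Real.norm_eq_abs]

theorem integrable_div_abs_sub_rpow_mul_prod {f : ℝ → ℝ} {α : ℝ} (R : ℝ) (hα0 : 0 ≤ α)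
    (hα1 : α < 1) (hf : Integrable f) :
    Integrable (fun z : ℝ × ℝ ↦ ((1 + |z.2|) / |z.1 - z.2|) ^ α * f z.2)
      ((volume.restrict (Ioo (-R) R)).prod volume) := by
  set ψ := (ball (0 : ℝ) 1).indicator fun s ↦ |s| ^ (-α)
  have hμ : (volume.restrict (Ioo (-R) R)).prod (volume : Measure ℝ) =
      (volume.prod volume).restrict (Ioo (-R) R ×ˢ univ) := by
    rw [← Measure.prod_restrict, Measure.restrict_univ]
  have hconv : Integrable (fun z : ℝ × ℝ ↦ ‖f z.2‖ * ψ (z.1 - z.2))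
      ((volume.restrict (Ioo (-R) R)).prod volume) := by
    rw [hμ]
    exact (hf.norm.convolution_integrand (ContinuousLinearMap.mul ℝ ℝ)
      (integrable_indicator_ball_abs_rpow_neg hα1)).restrict
  have hconst : Integrable (fun z : ℝ × ℝ ↦ (2 + R) * ‖f z.2‖)
      ((volume.restrict (Ioo (-R) R)).prod volume) :=
    (integrable_const (2 + R)).mul_prod hf.norm
  refine (hconst.add (hconv.const_mul (1 + R))).mono' ?_ ?_
  · exact (by fun_prop : Measurable fun z : ℝ × ℝ ↦ ((1 + |z.2|) / |z.1 - z.2|) ^ α)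
      |>.aestronglyMeasurable.mul hf.aestronglyMeasurable.comp_snd
  rw [hμ]
  filter_upwards [ae_restrict_mem (measurableSet_Ioo.prod MeasurableSet.univ)] with z hz
  have hx : |z.1| ≤ R := (abs_lt.2 hz.1).le
  calc ‖((1 + |z.2|) / |z.1 - z.2|) ^ α * f z.2‖
      = ((1 + |z.2|) / |z.1 - z.2|) ^ α * ‖f z.2‖ := by
        rw [norm_mul, Real.norm_eq_abs, abs_of_nonneg (rpow_nonneg (by positivity) _)]
    _ ≤ ((1 + R) * |z.1 - z.2| ^ (-α) + 1) * ‖f z.2‖ := by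
        gcongr
        exact div_abs_sub_rpow_le hx hα0 hα1.le
    _ ≤ ((1 + R) * (1 + ψ (z.1 - z.2)) + 1) * ‖f z.2‖ := by
        have : 0 ≤ 1 + R := by linarith [(abs_nonneg z.1).trans hx]
        gcongr
        exact abs_rpow_neg_le_one_add_indicator hα0 _
    _ = (2 + R) * ‖f z.2‖ + (1 + R) * (‖f z.2‖ * ψ (z.1 - z.2)) := by ring

theorem eps_regularity_exp_integrable_general (f : ℝ → ℝ) (p R : ℝ)
    (hpos : ∀ y, 0 ≤ f y)
    (hL1 : Integrable f)
    (hnz : 0 < ∫ y : ℝ, f y)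
    (hp : 1 ≤ p)
    (hsmall : p * ∫ y : ℝ, f y < Real.pi) :
    IntegrableOn
      (fun x : ℝ => Real.exp ((p / Real.pi) *
        ∫ y : ℝ, Real.log ((1 + |y|) / |x - y|) * f y))
      (Set.Ioo (-R) R) := by
  set m := ∫ y, f y
  set α := p * m / π
  have hα0 : 0 ≤ α := by positivity
  have hα1 : α < 1 := (div_lt_one pi_pos).2 hsmall
  have hcoef : p / π = α / m := by
    rw [div_div, mul_comm π, ← div_div, mul_div_cancel_right₀ _ hnz.ne']
  have H := integrable_div_abs_sub_rpow_mul_prod R hα0 hα1 hL1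
  have hmeas : AEStronglyMeasurable (fun x ↦ exp (p / π * ∫ y, log ((1 + |y|) / |x - y|) * f y))
      (volume.restrict (Ioo (-R) R)) := by
    have hlog : Measurable fun z : ℝ × ℝ ↦ log ((1 + |z.2|) / |z.1 - z.2|) := by fun_prop
    exact continuous_exp.comp_aestronglyMeasurable
      ((hlog.aestronglyMeasurable.mul hL1.aestronglyMeasurable.comp_snd).integral_prod_right'
        |>.const_mul _)
  refine (H.integral_prod_left.div_const m).mono' hmeas ?_
  filter_upwards [H.prod_right_ae] with x hx
  rw [Real.norm_eq_abs, abs_of_pos (exp_pos _), hcoef]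
  refine exp_mul_integral_log_mul_le hα0 (by fun_prop) ?_
    (ae_of_all _ (neg_log_one_add_abs_le_log_div_abs_sub x)) (ae_of_all _ hpos) hL1 hnz hx
  filter_upwards [compl_mem_ae_iff.2 (measure_singleton x)] with y hy
  exact div_pos (by positivity) (abs_pos.2 (sub_ne_zero.2 (Ne.symm hy)))

/-- Brezis–Merle type ε-regularity estimate in one dimension: if `f ≥ 0` is integrable
with `0 < ‖f‖_{L¹}` and `p‖f‖_{L¹} < π` for some `p ≥ 1`, then for every `R > 0`,
`∫_{B_R} exp((p/π) ∫ log((1+|y|)/|x−y|) f(y) dy) dx < ∞`. -/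
theorem eps_regularity_exp_integrable (f : ℝ → ℝ) (p R : ℝ)
    (hpos : ∀ y, 0 ≤ f y)
    (hL1 : Integrable f)
    (hnz : 0 < ∫ y : ℝ, f y)
    (hp : 1 ≤ p) (hR : 0 < R)
    (hsmall : p * ∫ y : ℝ, f y < Real.pi) :
    IntegrableOn
      (fun x : ℝ => Real.exp ((p / Real.pi) *
        ∫ y : ℝ, Real.log ((1 + |y|) / |x - y|) * f y))
      (Set.Ioo (-R) R) :=
  eps_regularity_exp_integrable_general f p R hpos hL1 hnz hp hsmall
end

section
/- Let f : ℝ → ℝ be measurable with 0 ≤ f(x) ≤ C⟨x⟩^{−1−2δ} for some C, δ > 0, and set Λ = ∫_ℝ f dx. Then the function w(x) = −(1/π) ∫_ℝ log|x−y| f(y) dy satisfies w(x) = −(Λ/π) log|x| + O(1) as |x| → ∞; more precisely, w(x) + (Λ/π) log|x| is bounded for |x| ≥ 2. -/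
open MeasureTheory Filter Set Topology
lemma negLog_integrable : Integrable (fun t : ℝ => max 0 (-Real.log |t|)) := by
  set L : ℝ → ℝ := fun t => max 0 (-Real.log |t|) with hLdef
  have hLmeas : Measurable L :=
    measurable_const.max ((Real.measurable_log.comp measurable_abs).neg)
  have hLnn : ∀ t, 0 ≤ L t := fun t => le_max_left _ _
  have hL1 : ∀ t : ℝ, 1 ≤ |t| → L t = 0 := by
    intro t ht
    simp only [hLdef, max_eq_left_iff]
    simpa using Real.log_nonneg ht
  have base : IntegrableOn (fun t : ℝ => t ^ (-(1/2) : ℝ)) (Ioc (0:ℝ) 1) := by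
    have h := intervalIntegral.intervalIntegrable_rpow' (a := 0) (b := 1)
      (r := (-(1/2) : ℝ)) (by norm_num)
    rwa [intervalIntegrable_iff_integrableOn_Ioc_of_le (by norm_num)] at h
  have hIoc : IntegrableOn L (Ioc (0:ℝ) 1) := by
    refine (base.const_mul 2).mono' hLmeas.aestronglyMeasurable ?_
    refine (ae_restrict_iff' measurableSet_Ioc).2 (ae_of_all _ fun t ht => ?_)
    have ht0 : (0:ℝ) < t := ht.1
    rw [Real.norm_eq_abs, abs_of_nonneg (hLnn t)]
    refine max_le (by positivity) ?_
    have h1 : -Real.log |t| = Real.log t⁻¹ := by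
      rw [abs_of_pos ht0, Real.log_inv]
    rw [h1]
    have h2 : Real.log t⁻¹ ≤ (t⁻¹) ^ ((1:ℝ)/2) / (1/2) :=
      Real.log_le_rpow_div (by positivity) (by norm_num)
    have h3 : (t⁻¹) ^ ((1:ℝ)/2) = t ^ (-(1/2) : ℝ) := by
      rw [Real.inv_rpow ht0.le, ← Real.rpow_neg ht0.le]
    rw [h3] at h2
    have h4 : t ^ (-(1/2) : ℝ) / (1/2) = 2 * t ^ (-(1/2) : ℝ) := by ring
    rw [h4] at h2
    exact h2
  have hg : Integrable (Set.indicator (Ioc (0:ℝ) 1) L) :=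
    (integrable_indicator_iff measurableSet_Ioc).2 hIoc
  have hgneg : Integrable (fun t => Set.indicator (Ioc (0:ℝ) 1) L (-t)) := hg.comp_neg
  refine (hg.add hgneg).mono' hLmeas.aestronglyMeasurable (ae_of_all _ fun t => ?_)
  rw [Real.norm_eq_abs, abs_of_nonneg (hLnn t)]
  simp only [Pi.add_apply]
  have hind : ∀ s : Set ℝ, ∀ u : ℝ, 0 ≤ Set.indicator s L u :=
    fun s u => Set.indicator_nonneg (fun v _ => hLnn v) u
  by_cases h1 : t ∈ Ioc (0:ℝ) 1
  · rw [Set.indicator_of_mem h1]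
    have := hind (Ioc (0:ℝ) 1) (-t); linarith
  · by_cases h2 : (-t) ∈ Ioc (0:ℝ) 1
    · rw [Set.indicator_of_mem h2]
      have hLt : L (-t) = L t := by simp [hLdef]
      have := hind (Ioc (0:ℝ) 1) t; rw [hLt] at *; linarith
    · have hLt0 : L t = 0 := by
        rcases eq_or_ne t 0 with rfl | ht0
        · simp [hLdef]
        · apply hL1
          rcases lt_or_ge t 0 with htneg | htpos
          · by_contra hc
            push_neg at hc
            exact h2 ⟨by linarith, by rw [abs_of_neg htneg] at hc; linarith⟩
          · by_contra hc
            push_neg at hc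
            have ht0' : 0 < t := lt_of_le_of_ne htpos (Ne.symm ht0)
            exact h1 ⟨ht0', by rw [abs_of_pos ht0'] at hc; linarith⟩
      rw [hLt0]
      exact add_nonneg (hind _ t) (hind _ (-t))

lemma bracket_integrable {a : ℝ} (ha : 1 < a) :
    Integrable (fun y : ℝ => Real.sqrt (1 + y ^ 2) ^ (-a)) := by
  have h := integrable_rpow_neg_one_add_norm_sq (E := ℝ) (μ := volume) (r := a)
    (by simpa using ha)
  refine h.congr (ae_of_all _ fun y => ?_)
  show ((1:ℝ) + ‖y‖ ^ 2) ^ (-a / 2) = Real.sqrt (1 + y ^ 2) ^ (-a)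
  have h1 : (1:ℝ) + ‖y‖ ^ 2 = 1 + y ^ 2 := by
    rw [Real.norm_eq_abs, sq_abs]
  rw [h1, Real.sqrt_eq_rpow, ← Real.rpow_mul (by positivity)]
  congr 1
  ring

lemma key_ineq {x y : ℝ} (hx : 2 ≤ |x|) :
    abs (Real.log |x - y| - Real.log |x|) ≤
      Real.log (1 + |y|) + max 0 (-Real.log |x - y|) := by
  have hx1 : (1:ℝ) ≤ |x| := by linarith
  have hx0 : (0:ℝ) < |x| := by linarith
  have hby : |x| ≤ |x - y| + |y| := by
    have : x = (x - y) + y := by ring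
    calc |x| = |(x - y) + y| := by rw [← this]
    _ ≤ |x - y| + |y| := abs_add_le _ _
  have hyb : |x - y| ≤ |x| + |y| := abs_sub _ _
  have hlogy : 0 ≤ Real.log (1 + |y|) := Real.log_nonneg (by simp [abs_nonneg])
  have hmax : 0 ≤ max 0 (-Real.log |x - y|) := le_max_left _ _
  rw [abs_sub_le_iff]
  constructor
  · -- log |x-y| - log |x| ≤ RHS
    rcases eq_or_lt_of_le (abs_nonneg (x - y)) with hb | hb
    · rw [← hb, Real.log_zero, neg_zero, max_self]
      have := Real.log_nonneg hx1
      linarith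
    · have hle : |x - y| ≤ |x| * (1 + |y|) := by
        have : |y| ≤ |x| * |y| := le_mul_of_one_le_left (abs_nonneg y) hx1
        calc |x - y| ≤ |x| + |y| := hyb
        _ ≤ |x| + |x| * |y| := by linarith
        _ = |x| * (1 + |y|) := by ring
      have h2 : Real.log |x - y| ≤ Real.log (|x| * (1 + |y|)) :=
        Real.log_le_log hb hle
      rw [Real.log_mul (ne_of_gt hx0) (by positivity)] at h2
      linarith
  · -- log |x| - log |x-y| ≤ RHS
    by_cases hb1 : 1 ≤ |x - y|
    · have hle : |x| ≤ |x - y| * (1 + |y|) := by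
        have : |y| ≤ |x - y| * |y| := le_mul_of_one_le_left (abs_nonneg y) hb1
        calc |x| ≤ |x - y| + |y| := hby
        _ ≤ |x - y| + |x - y| * |y| := by linarith
        _ = |x - y| * (1 + |y|) := by ring
      have h2 : Real.log |x| ≤ Real.log (|x - y| * (1 + |y|)) :=
        Real.log_le_log hx0 hle
      rw [Real.log_mul (by linarith : |x - y| ≠ 0) (by positivity)] at h2
      linarith
    · push_neg at hb1
      have h2 : Real.log |x| ≤ Real.log (1 + |y|) :=
        Real.log_le_log hx0 (by linarith)
      have h3 : -Real.log |x - y| ≤ max 0 (-Real.log |x - y|) := le_max_right _ _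
      linarith


/-- Logarithmic potential asymptotics: if `0 ≤ f(x) ≤ C⟨x⟩^{−1−2δ}` and
`Λ = ∫ f`, then `w(x) = −(1/π)∫ log|x−y| f(y) dy` satisfies
`w(x) = −(Λ/π) log|x| + O(1)`; precisely, `w(x) + (Λ/π) log|x|` is bounded on `|x| ≥ 2`. -/
theorem log_potential_asymptotics (f : ℝ → ℝ) (C δ : ℝ)
    (hC : 0 < C) (hδ : 0 < δ)
    (hmeas : Measurable f)
    (hbound : ∀ x : ℝ, 0 ≤ f x ∧ f x ≤ C * Real.sqrt (1 + x ^ 2) ^ (-(1 : ℝ) - 2 * δ)) :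
    ∃ M : ℝ, ∀ x : ℝ, 2 ≤ |x| →
      abs ((-(1 / Real.pi) * ∫ y : ℝ, Real.log |x - y| * f y)
        + ((∫ y : ℝ, f y) / Real.pi) * Real.log |x|) ≤ M := by
  have hπ : 0 < Real.pi := Real.pi_pos
  have hf_nn : ∀ y, 0 ≤ f y := fun y => (hbound y).1
  have hfM : AEStronglyMeasurable f volume := hmeas.aestronglyMeasurable
  have hbr_pos : ∀ y : ℝ, 0 < Real.sqrt (1 + y ^ 2) := fun y => Real.sqrt_pos.2 (by positivity)
  have hbr_one : ∀ y : ℝ, 1 ≤ Real.sqrt (1 + y ^ 2) := by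
    intro y
    have h := Real.sqrt_le_sqrt (show (1:ℝ) ≤ 1 + y ^ 2 by nlinarith [sq_nonneg y])
    rwa [Real.sqrt_one] at h
  have hf_le : ∀ y, f y ≤ C * Real.sqrt (1 + y ^ 2) ^ (-(1:ℝ) - 2 * δ) := fun y => (hbound y).2
  have hfC : ∀ y, f y ≤ C := by
    intro y
    refine (hf_le y).trans ?_
    have h1 : Real.sqrt (1 + y ^ 2) ^ (-(1:ℝ) - 2 * δ) ≤ 1 :=
      Real.rpow_le_one_of_one_le_of_nonpos (hbr_one y) (by linarith)
    calc C * Real.sqrt (1 + y ^ 2) ^ (-(1:ℝ) - 2 * δ) ≤ C * 1 :=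
          mul_le_mul_of_nonneg_left h1 hC.le
    _ = C := mul_one C
  have hf_int : Integrable f := by
    refine ((bracket_integrable (a := 1 + 2 * δ) (by linarith)).const_mul C).mono'
      hfM (ae_of_all _ fun y => ?_)
    rw [Real.norm_eq_abs, abs_of_nonneg (hf_nn y)]
    rw [show (-(1 + 2 * δ) : ℝ) = -(1:ℝ) - 2 * δ by ring]
    exact hf_le y
  have hlog_nn : ∀ y : ℝ, 0 ≤ Real.log (1 + |y|) :=
    fun y => Real.log_nonneg (by simp [abs_nonneg])
  have hlog_le : ∀ y : ℝ, Real.log (1 + |y|) ≤ (2 ^ δ / δ) * Real.sqrt (1 + y ^ 2) ^ δ := by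
    intro y
    have h2 : |y| ≤ Real.sqrt (1 + y ^ 2) := by
      rw [← Real.sqrt_sq_eq_abs]
      exact Real.sqrt_le_sqrt (by nlinarith)
    have h1 : 1 + |y| ≤ 2 * Real.sqrt (1 + y ^ 2) := by linarith [hbr_one y]
    have h3 : Real.log (1 + |y|) ≤ (1 + |y|) ^ δ / δ :=
      Real.log_le_rpow_div (by positivity) hδ
    have h4 : (1 + |y|) ^ δ ≤ (2 * Real.sqrt (1 + y ^ 2)) ^ δ :=
      Real.rpow_le_rpow (by positivity) h1 hδ.le
    rw [Real.mul_rpow (by norm_num) (hbr_pos y).le] at h4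
    calc Real.log (1 + |y|) ≤ (1 + |y|) ^ δ / δ := h3
    _ ≤ ((2:ℝ) ^ δ * Real.sqrt (1 + y ^ 2) ^ δ) / δ := by gcongr
    _ = (2 ^ δ / δ) * Real.sqrt (1 + y ^ 2) ^ δ := by ring
  have hlogf_int : Integrable (fun y : ℝ => Real.log (1 + |y|) * f y) := by
    have hint : Integrable (fun y : ℝ => (C * (2 ^ δ / δ)) * Real.sqrt (1 + y ^ 2) ^ (-(1 + δ))) :=
      (bracket_integrable (by linarith)).const_mul _
    refine hint.mono'
      (((Real.measurable_log.comp (measurable_const.add measurable_id.abs)).mul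
        hmeas).aestronglyMeasurable) (ae_of_all _ fun y => ?_)
    rw [Real.norm_eq_abs, abs_of_nonneg (mul_nonneg (hlog_nn y) (hf_nn y))]
    have e1 : Real.log (1 + |y|) * f y
        ≤ ((2 ^ δ / δ) * Real.sqrt (1 + y ^ 2) ^ δ) * (C * Real.sqrt (1 + y ^ 2) ^ (-(1:ℝ) - 2 * δ)) :=
      mul_le_mul (hlog_le y) (hf_le y) (hf_nn y) (by positivity)
    have e2 : Real.sqrt (1 + y ^ 2) ^ δ * Real.sqrt (1 + y ^ 2) ^ (-(1:ℝ) - 2 * δ)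
        = Real.sqrt (1 + y ^ 2) ^ (-(1 + δ)) := by
      rw [← Real.rpow_add (hbr_pos y)]
      congr 1
      ring
    calc Real.log (1 + |y|) * f y
        ≤ ((2 ^ δ / δ) * Real.sqrt (1 + y ^ 2) ^ δ) * (C * Real.sqrt (1 + y ^ 2) ^ (-(1:ℝ) - 2 * δ)) := e1
    _ = (C * (2 ^ δ / δ)) * (Real.sqrt (1 + y ^ 2) ^ δ * Real.sqrt (1 + y ^ 2) ^ (-(1:ℝ) - 2 * δ)) := by ring
    _ = (C * (2 ^ δ / δ)) * Real.sqrt (1 + y ^ 2) ^ (-(1 + δ)) := by rw [e2]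
  set I1 := ∫ y : ℝ, Real.log (1 + |y|) * f y with hI1
  set I2 := ∫ t : ℝ, max 0 (-Real.log |t|) with hI2
  refine ⟨(1 / Real.pi) * (I1 + C * I2), fun x hx => ?_⟩
  have hx0 : (0:ℝ) < |x| := by linarith
  have hLx_int : Integrable (fun y : ℝ => max 0 (-Real.log |x - y|)) :=
    negLog_integrable.comp_sub_left x
  have hLxmeas : Measurable (fun y : ℝ => max 0 (-Real.log |x - y|)) :=
    measurable_const.max
      ((Real.measurable_log.comp ((measurable_const.sub measurable_id).abs)).neg)
  have hLf_int : Integrable (fun y : ℝ => max 0 (-Real.log |x - y|) * f y) := by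
    refine (hLx_int.const_mul C).mono' (hLxmeas.mul hmeas).aestronglyMeasurable
      (ae_of_all _ fun y => ?_)
    rw [Real.norm_eq_abs, abs_of_nonneg (mul_nonneg (le_max_left _ _) (hf_nn y))]
    calc max 0 (-Real.log |x - y|) * f y ≤ max 0 (-Real.log |x - y|) * C :=
          mul_le_mul_of_nonneg_left (hfC y) (le_max_left _ _)
    _ = C * max 0 (-Real.log |x - y|) := by ring
  have hlogxy_meas : Measurable (fun y : ℝ => Real.log |x - y|) :=
    Real.measurable_log.comp ((measurable_const.sub measurable_id).abs)
  have hmain_int : Integrable (fun y : ℝ => Real.log |x - y| * f y) := by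
    have hdom : Integrable (fun y : ℝ => abs (Real.log |x|) * f y
        + (Real.log (1 + |y|) * f y + max 0 (-Real.log |x - y|) * f y)) :=
      (hf_int.const_mul _).add (hlogf_int.add hLf_int)
    refine hdom.mono' (hlogxy_meas.mul hmeas).aestronglyMeasurable (ae_of_all _ fun y => ?_)
    rw [Real.norm_eq_abs, abs_mul, abs_of_nonneg (hf_nn y)]
    have hk := key_ineq (x := x) (y := y) hx
    have t1 : abs (Real.log |x - y|) ≤ abs (Real.log |x - y| - Real.log |x|) + abs (Real.log |x|) := by
      calc abs (Real.log |x - y|) = abs ((Real.log |x - y| - Real.log |x|) + Real.log |x|) := by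
            congr 1; ring
      _ ≤ _ := abs_add_le _ _
    have k1 : abs (Real.log |x - y|)
        ≤ abs (Real.log |x|) + (Real.log (1 + |y|) + max 0 (-Real.log |x - y|)) := by linarith
    calc abs (Real.log |x - y|) * f y
        ≤ (abs (Real.log |x|) + (Real.log (1 + |y|) + max 0 (-Real.log |x - y|))) * f y :=
          mul_le_mul_of_nonneg_right k1 (hf_nn y)
    _ = abs (Real.log |x|) * f y
        + (Real.log (1 + |y|) * f y + max 0 (-Real.log |x - y|) * f y) := by ring
  have heq : (-(1 / Real.pi) * ∫ y : ℝ, Real.log |x - y| * f y)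
        + ((∫ y : ℝ, f y) / Real.pi) * Real.log |x|
      = -(1 / Real.pi) * ∫ y : ℝ, (Real.log |x - y| - Real.log |x|) * f y := by
    have h1 : ∫ y : ℝ, (Real.log |x - y| - Real.log |x|) * f y
        = (∫ y : ℝ, Real.log |x - y| * f y) - Real.log |x| * ∫ y : ℝ, f y := by
      have e : (fun y : ℝ => (Real.log |x - y| - Real.log |x|) * f y)
          = fun y : ℝ => Real.log |x - y| * f y - Real.log |x| * f y := by
        funext y; ring
      rw [e, integral_sub hmain_int (hf_int.const_mul _), integral_const_mul]
    rw [h1]; ring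
  have hS : abs (∫ y : ℝ, (Real.log |x - y| - Real.log |x|) * f y) ≤ I1 + C * I2 := by
    have h2 := norm_integral_le_integral_norm (μ := volume) (fun y : ℝ => (Real.log |x - y| - Real.log |x|) * f y)
    rw [Real.norm_eq_abs] at h2
    have h3 : (∫ y : ℝ, ‖(Real.log |x - y| - Real.log |x|) * f y‖)
        ≤ ∫ y : ℝ, (Real.log (1 + |y|) * f y + max 0 (-Real.log |x - y|) * f y) := by
      refine integral_mono_of_nonneg (ae_of_all _ fun y => norm_nonneg _)
        (hlogf_int.add hLf_int) (ae_of_all _ fun y => ?_)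
      show ‖(Real.log |x - y| - Real.log |x|) * f y‖
          ≤ Real.log (1 + |y|) * f y + max 0 (-Real.log |x - y|) * f y
      rw [Real.norm_eq_abs, abs_mul, abs_of_nonneg (hf_nn y)]
      calc abs (Real.log |x - y| - Real.log |x|) * f y
          ≤ (Real.log (1 + |y|) + max 0 (-Real.log |x - y|)) * f y :=
            mul_le_mul_of_nonneg_right (key_ineq hx) (hf_nn y)
      _ = Real.log (1 + |y|) * f y + max 0 (-Real.log |x - y|) * f y := by ring
    have h4 : (∫ y : ℝ, (Real.log (1 + |y|) * f y + max 0 (-Real.log |x - y|) * f y))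
        = I1 + ∫ y : ℝ, max 0 (-Real.log |x - y|) * f y :=
      integral_add hlogf_int hLf_int
    have h5 : (∫ y : ℝ, max 0 (-Real.log |x - y|) * f y) ≤ C * I2 := by
      have h6 : (∫ y : ℝ, max 0 (-Real.log |x - y|) * f y)
          ≤ ∫ y : ℝ, C * max 0 (-Real.log |x - y|) := by
        refine integral_mono hLf_int (hLx_int.const_mul C) fun y => ?_
        calc max 0 (-Real.log |x - y|) * f y ≤ max 0 (-Real.log |x - y|) * C :=
              mul_le_mul_of_nonneg_left (hfC y) (le_max_left _ _)
        _ = C * max 0 (-Real.log |x - y|) := by ring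
      have h7 : (∫ y : ℝ, C * max 0 (-Real.log |x - y|))
          = C * ∫ y : ℝ, max 0 (-Real.log |x - y|) := integral_const_mul _ _
      have h8 : (∫ y : ℝ, max 0 (-Real.log |x - y|)) = I2 := by
        rw [hI2]
        exact integral_sub_left_eq_self (fun t : ℝ => max 0 (-Real.log |t|)) volume x
      rw [h7, h8] at h6
      exact h6
    linarith
  rw [heq, abs_mul, abs_neg, abs_of_pos (show (0:ℝ) < 1 / Real.pi by positivity)]
  exact mul_le_mul_of_nonneg_left hS (by positivity)
end
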